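/- Let t ≥ 6 be even with (t/2 − 1 − 2·floor((2t+1)/12)) ≡ 0 (mod 3), or t ≥ 6 odd with ((t−1)/2 − 2·floor((2t+1)/12)) ≡ 2 (mod 3). Then the largest size m(t) of a partition in DS(t) equals (1/3)(t−1)(t+1−4·floor((2t+1)/12)) + floor((2t+1)/12)·(2t+1−2·floor((2t+1)/12)). -/

import Mathlib

/-- An integer partition, given by its (weakly decreasing, eventually zero)
sequence of parts, indexed from `0`. -/
structure IntPartition where
  parts : ℕ → ℕ
  antitone : ∀ i j, i ≤ j → parts j ≤ parts i
  finite : ∃ N, ∀ i, N ≤ i → parts i = 0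

namespace IntPartition

/-- The size of a partition: the sum of its parts. -/
noncomputable def size (lam : IntPartition) : ℕ := ∑ᶠ i, lam.parts i

/-- The parts of the conjugate partition: `conjParts lam j` is the number of
rows `i` with `lam.parts i > j` (rows and columns are `0`-indexed). -/
noncomputable def conjParts (lam : IntPartition) (j : ℕ) : ℕ :=
  Nat.card {i : ℕ | j < lam.parts i}

/-- A partition is self-conjugate if it equals its conjugate. -/
def IsSelfConjugate (lam : IntPartition) : Prop :=
  ∀ j, lam.conjParts j = lam.parts j

/-- `(i, j)` (both `0`-indexed) is a cell of the Young diagram of `lam`. -/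
def IsCell (lam : IntPartition) (i j : ℕ) : Prop := j < lam.parts i

/-- The hook length of the cell `(i, j)` (both `0`-indexed): the number of
cells directly to the right, plus the number directly below, plus one. -/
noncomputable def hook (lam : IntPartition) (i j : ℕ) : ℕ :=
  (lam.parts i - j) + (lam.conjParts j - i) - 1

/-- A partition is a `t`-core if no hook length is divisible by `t`. -/
def IsCore (lam : IntPartition) (t : ℕ) : Prop :=
  ∀ i j, lam.IsCell i j → ¬ (t ∣ lam.hook i j)

/-- The size of the Durfee square: the largest `k` such that the partition has
at least `k` parts of size at least `k`. -/
noncomputable def durfee (lam : IntPartition) : ℕ :=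
  Nat.card {i : ℕ | i < lam.parts i}

/-- A partition has distinct parts if its (nonzero) parts are pairwise different. -/
def DistinctParts (lam : IntPartition) : Prop :=
  ∀ i j, lam.parts i ≠ 0 → lam.parts j ≠ 0 → i ≠ j → lam.parts i ≠ lam.parts j

/-- The set of main diagonal hook lengths of `lam`. -/
noncomputable def MD (lam : IntPartition) : Set ℕ :=
  {h | ∃ i < lam.durfee, lam.hook i i = h}

/-- `lam ∈ DS(t)`: `lam` is a self-conjugate `(t, t+1)`-core partition whose
first `durfee lam` parts are pairwise distinct. -/
def InDS (lam : IntPartition) (t : ℕ) : Prop :=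
  lam.IsSelfConjugate ∧ lam.IsCore t ∧ lam.IsCore (t + 1) ∧
    ∀ i j, i < lam.durfee → j < lam.durfee → i ≠ j → lam.parts i ≠ lam.parts j

end IntPartition

/-!
For a self-conjugate partition the size is the sum of the diagonal hooks, which are odd; for
`λ ∈ DS(t)` they are at least `4` apart. A hook in the Durfee square is the mean of two diagonal
hooks, so the `t`- and `(t + 1)`-core conditions say that no two diagonal hooks add up to `2t` or
`2t + 2`. On the first row, the hooks outside the Durfee square take every value in
`[1, λ₀ - 1]` except `(h₀₀ - h)/2` for the other diagonal hooks `h`; hence `h₀₀ ≥ 2t + 1` would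
make `h₀₀ - 2t` and, unless `h₀₀ = 2t + 1`, `h₀₀ - 2t - 2` diagonal hooks, against the gap `4`
or (for `h₀₀ = 2t + 1` and the hook `1`) the forbidden sum `2t + 2`.

Folding every hook `h > t + 1` to `2t + 1 - h` turns the diagonal hooks into a subset of
`[1, t - 1]` with gaps at least `3`, whose weight (`x` at odd, `2t + 1 - x` at even positions) is
the size. Removing the largest position shows by induction that this weight is at most that of a
packed configuration `2, 6, …, 4e - 2, 4e + 1, 4e + 4, …`, and the best `e` is
`a = ⌊(2t + 1)/12⌋`. The bound is attained by the partition whose first `a + c` rows,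
`3c + 4a = t + 1`, are `t, t - 1, …, t - a + 1` and then drop by `2`.
-/

open Finset

theorem Nat.lt_card_setOf_iff {P : ℕ → Prop} (hP : ∀ i j, i ≤ j → P j → P i)
    (hfin : ∃ N, ¬ P N) (i : ℕ) : i < Nat.card {i | P i} ↔ P i := by
  classical
  have hset : {i | P i} = Set.Iio (Nat.find hfin) := by
    ext m
    exact ⟨fun hm => by_contra fun h => Nat.find_spec hfin (hP _ _ (not_lt.mp h) hm),
      fun hm => not_not.mp (Nat.find_min hfin hm)⟩
  rw [hset, Nat.card_coe_set_eq, Set.ncard_Iio_nat]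
  exact (Set.ext_iff.mp hset i).symm

theorem Finset.two_mul_sum_range_sub_mul (A B : ℤ) (n : ℕ) :
    2 * ∑ i ∈ range n, (A - B * i) = n * (2 * A - B * (n - 1)) := by
  induction n with
  | zero => simp
  | succ n ih =>
    rw [sum_range_succ, mul_add, ih]
    push_cast
    ring

namespace IntPartition

theorem exists_parts_eq_zero (lam : IntPartition) : ∃ N, lam.parts N = 0 :=
  let ⟨N, hN⟩ := lam.finite; ⟨N, hN N le_rfl⟩

variable {lam : IntPartition}

theorem lt_of_lt_parts {N i j : ℕ} (hN : lam.parts N = 0) (h : j < lam.parts i) : i < N :=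
  by_contra fun hi => by simp [Nat.eq_zero_of_le_zero (hN ▸ lam.antitone N i (not_lt.mp hi))] at h

theorem lt_conjParts_iff {i j : ℕ} : i < lam.conjParts j ↔ j < lam.parts i :=
  Nat.lt_card_setOf_iff (fun _ _ h hj => hj.trans_le (lam.antitone _ _ h))
    (let ⟨N, hN⟩ := lam.exists_parts_eq_zero; ⟨N, by simp [hN]⟩) i

theorem lt_durfee_iff {i : ℕ} : i < lam.durfee ↔ i < lam.parts i :=
  Nat.lt_card_setOf_iff (fun _ _ h hj => (h.trans_lt hj).trans_le (lam.antitone _ _ h))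
    (let ⟨N, hN⟩ := lam.exists_parts_eq_zero; ⟨N, by simp [hN]⟩) i

theorem hook_pos {i j : ℕ} (hcell : lam.IsCell i j) : 0 < lam.hook i j := by
  have := lt_conjParts_iff.mpr hcell
  unfold IsCell at hcell
  unfold hook
  omega

theorem parts_le_of_durfee_le {j : ℕ} (hj : lam.durfee ≤ j) : lam.parts j ≤ j :=
  not_lt.mp (lt_durfee_iff.not.mp (not_lt.mpr hj))

theorem strictMonoOn_sub_parts : StrictMonoOn (fun j => j - lam.parts j) (Set.Ici lam.durfee) :=
  fun j₁ hj₁ j₂ _ hlt => by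
    have := lam.antitone j₁ j₂ hlt.le
    have := parts_le_of_durfee_le (Set.mem_Ici.mp hj₁)
    simp only
    omega

theorem strictAntiOn_parts_sub : StrictAntiOn (fun i => lam.parts i - i - 1) (Set.Iio lam.durfee) :=
  fun i₁ _ i₂ hi₂ hlt => by
    have := lam.antitone i₁ i₂ hlt.le
    have := lt_durfee_iff.mp (Set.mem_Iio.mp hi₂)
    simp only
    omega

theorem isSelfConjugate_iff :
    lam.IsSelfConjugate ↔ ∀ i j, j < lam.parts i ↔ i < lam.parts j := by
  refine ⟨fun hsc i j => by rw [← lt_conjParts_iff, hsc], fun hsymm j => ?_⟩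
  have hset : {i | j < lam.parts i} = Set.Iio (lam.parts j) := Set.ext fun i => hsymm i j
  rw [conjParts, hset, Nat.card_coe_set_eq, Set.ncard_Iio_nat]

section SelfConjugate

variable (hsc : lam.IsSelfConjugate)
include hsc

theorem parts_le_durfee {i : ℕ} (hi : lam.durfee ≤ i) : lam.parts i ≤ lam.durfee := by
  by_contra! h
  have : i < lam.parts lam.durfee := (isSelfConjugate_iff.mp hsc i _).mp h
  exact (lt_irrefl _) (lt_durfee_iff.mpr (hi.trans_lt this))

theorem hook_comm (i j : ℕ) : lam.hook i j = lam.hook j i := by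
  rw [hook, hook, hsc, hsc]
  omega

theorem hook_diag {i : ℕ} (hi : i < lam.durfee) : lam.hook i i = 2 * lam.parts i - 2 * i - 1 := by
  have := lt_durfee_iff.mp hi
  rw [hook, hsc]
  omega

theorem hook_diag_mod_two {i : ℕ} (hi : i < lam.durfee) : lam.hook i i % 2 = 1 := by
  have := lt_durfee_iff.mp hi
  rw [hook_diag hsc hi]
  omega

theorem hook_diag_add_two_le {i j : ℕ} (hij : i < j) (hj : j < lam.durfee) :
    lam.hook j j + 2 ≤ lam.hook i i := by
  have := lt_durfee_iff.mp hj
  have := lam.antitone i j hij.le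
  rw [hook_diag hsc (hij.trans hj), hook_diag hsc hj]
  omega

theorem isCell_and_two_mul_hook {i j : ℕ} (hi : i < lam.durfee) (hj : j < lam.durfee) :
    lam.IsCell i j ∧ 2 * lam.hook i j = lam.hook i i + lam.hook j j := by
  have hpi := lt_durfee_iff.mp hi
  have hpj := lt_durfee_iff.mp hj
  have hji : j < lam.parts i := by
    rcases le_total i j with h | h
    · exact hpj.trans_le (lam.antitone i j h)
    · omega
  have hij : i < lam.parts j := (isSelfConjugate_iff.mp hsc i j).mp hji
  refine ⟨hji, ?_⟩
  rw [hook_diag hsc hi, hook_diag hsc hj, hook, hsc]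
  omega

theorem hook_lt_parts_zero {i j : ℕ} (hcell : lam.IsCell i j)
    (hout : ¬ (i < lam.durfee ∧ j < lam.durfee)) : lam.hook i j < lam.parts 0 := by
  have key : ∀ i j, lam.IsCell i j → lam.durfee ≤ j → lam.hook i j < lam.parts 0 :=
    fun i j hcell hj => by
      have := parts_le_durfee hsc hj
      have := lam.antitone 0 i (Nat.zero_le i)
      unfold IsCell at hcell
      rw [hook, hsc]
      omega
  by_cases hj : j < lam.durfee
  · rw [hook_comm hsc]
    exact key j i ((isSelfConjugate_iff.mp hsc i j).mp hcell) (not_lt.mp fun hi => hout ⟨hi, hj⟩)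
  · exact key i j hcell (not_lt.mp hj)

theorem parts_sub_add_parts_sub_succ (i : ℕ) :
    (lam.parts i - i) + (lam.parts i - (i + 1)) = if i < lam.durfee then lam.hook i i else 0 := by
  split_ifs with hi
  · have := lt_durfee_iff.mp hi
    rw [hook_diag hsc hi]
    omega
  · have := lt_durfee_iff.not.mp hi
    omega

/-- Cells are counted row by row: the cells right of the diagonal give `λᵢ - i` in row `i`, and
by symmetry the cells left of it give `λᵢ - i - 1`. -/
theorem size_eq_sum_hook_diag : lam.size = ∑ i ∈ range lam.durfee, lam.hook i i := by
  obtain ⟨N, hN⟩ := lam.exists_parts_eq_zero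
  have hsymm := isSelfConjugate_iff.mp hsc
  have hlt : ∀ i j, j < lam.parts i → i < N ∧ j < N := fun i j h =>
    ⟨lt_of_lt_parts hN h, lt_of_lt_parts hN ((hsymm i j).mp h)⟩
  have hrow : ∀ i ∈ range N, lam.parts i =
      #{j ∈ range N | i ≤ j ∧ j < lam.parts i} + #{j ∈ range N | j < i ∧ j < lam.parts i} := by
    intro i _
    rw [← card_union_of_disjoint (disjoint_filter.mpr fun _ _ h h' => by omega), ← filter_or]
    convert (card_range (lam.parts i)).symm using 2
    ext j
    have := hlt i j
    simp only [mem_filter, mem_range]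
    omega
  have hlower : ∑ i ∈ range N, #{j ∈ range N | j < i ∧ j < lam.parts i} =
      ∑ i ∈ range N, #{j ∈ range N | i < j ∧ j < lam.parts i} := by
    simp only [card_filter]
    rw [sum_comm]
    exact sum_congr rfl fun i _ => sum_congr rfl fun j _ => by simp only [hsymm j i]
  have hdiag : ∀ i ∈ range N, #{j ∈ range N | i ≤ j ∧ j < lam.parts i} +
      #{j ∈ range N | i < j ∧ j < lam.parts i} = if i < lam.durfee then lam.hook i i else 0 := by
    intro i _
    have hIco : ∀ k, {j ∈ range N | k ≤ j ∧ j < lam.parts i} = Ico k (lam.parts i) := fun k => by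
      ext j
      have := hlt i j
      simp only [mem_filter, mem_range, mem_Ico]
      omega
    rw [hIco, show {j ∈ range N | i < j ∧ j < lam.parts i} = _ from hIco (i + 1),
      Nat.card_Ico, Nat.card_Ico, parts_sub_add_parts_sub_succ hsc]
  have hdN : lam.durfee ≤ N := by
    by_contra! h
    simpa [hN] using lt_durfee_iff.mp h
  rw [size, finsum_eq_sum_of_support_subset _ (s := range N) fun i hi => by
      simpa using fun h => hi (Nat.eq_zero_of_le_zero (hN ▸ lam.antitone N i h)),
    sum_congr rfl hrow, sum_add_distrib, hlower, ← sum_add_distrib, sum_congr rfl hdiag,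
    ← sum_filter, (by ext; simp; omega : (range N).filter (· < lam.durfee) = range lam.durfee)]

theorem hook_zero_add_sub_parts {j : ℕ} (hdj : lam.durfee ≤ j) (hj : j < lam.parts 0) :
    lam.hook 0 j + (j - lam.parts j) + 1 = lam.parts 0 := by
  have : 0 < lam.parts j := by rw [← hsc]; exact lt_conjParts_iff.mpr hj
  have := parts_le_of_durfee_le hdj
  rw [hook, hsc]
  omega

/-- Both images are injective, and they are disjoint by self-conjugacy; counting,
`(λ₀ - d) + (d - 1) = λ₀ - 1`, they fill `[0, λ₀ - 2]`. -/
theorem image_sub_parts_union_image_parts_sub (hd : 0 < lam.durfee) :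
    (Ico lam.durfee (lam.parts 0)).image (fun j => j - lam.parts j) ∪
      (Ico 1 lam.durfee).image (fun i => lam.parts i - i - 1) = range (lam.parts 0 - 1) := by
  set d := lam.durfee
  set p := lam.parts 0
  let U := (Ico d p).image fun j => j - lam.parts j
  let D := (Ico 1 d).image fun i => lam.parts i - i - 1
  have hU : #U = p - d := by
    rw [card_image_of_injOn (strictMonoOn_sub_parts.injOn.mono fun j hj => (mem_Ico.mp hj).1),
      Nat.card_Ico]
  have hD : #D = d - 1 := by
    rw [card_image_of_injOn (strictAntiOn_parts_sub.injOn.mono fun i hi => (mem_Ico.mp hi).2),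
      Nat.card_Ico]
  have hdisj : Disjoint U D := by
    refine disjoint_left.mpr fun x hxU hxD => ?_
    obtain ⟨j, hj, rfl⟩ := mem_image.mp hxU
    obtain ⟨i, hi, heq⟩ := mem_image.mp hxD
    obtain ⟨hdj, hjp⟩ := mem_Ico.mp hj
    have := isSelfConjugate_iff.mp hsc i j
    have := parts_le_durfee hsc hdj
    have := lt_durfee_iff.mp (mem_Ico.mp hi).2
    omega
  have hsub : U ∪ D ⊆ range (p - 1) := by
    refine union_subset (fun x hx => ?_) (fun x hx => ?_) <;> rw [mem_range]
    · obtain ⟨j, hj, rfl⟩ := mem_image.mp hx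
      obtain ⟨hdj, hjp⟩ := mem_Ico.mp hj
      have := hook_zero_add_sub_parts hsc hdj hjp
      have := hook_pos (show lam.IsCell 0 j from hjp)
      omega
    · obtain ⟨i, hi, rfl⟩ := mem_image.mp hx
      have : lam.parts i ≤ p := lam.antitone 0 i (Nat.zero_le i)
      have := (mem_Ico.mp hi).1
      have := lt_durfee_iff.mp (mem_Ico.mp hi).2
      omega
  exact eq_of_subset_of_card_le hsub
    (by rw [card_union_of_disjoint hdisj, hU, hD, card_range]; omega)

theorem exists_hook_zero_eq_or_hook_diag_add {m : ℕ} (hm : 1 ≤ m) (hmp : m < lam.parts 0) :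
    (∃ j, lam.IsCell 0 j ∧ lam.hook 0 j = m) ∨
      ∃ i < lam.durfee, lam.hook i i + 2 * m = lam.hook 0 0 := by
  have hd : 0 < lam.durfee := lt_durfee_iff.mpr (by omega)
  have hx : lam.parts 0 - 1 - m ∈ _ :=
    (image_sub_parts_union_image_parts_sub hsc hd).symm ▸ mem_range.mpr (by omega)
  rcases mem_union.mp hx with hx | hx
  · obtain ⟨j, hj, hjx⟩ := mem_image.mp hx
    have := hook_zero_add_sub_parts hsc (mem_Ico.mp hj).1 (mem_Ico.mp hj).2
    exact Or.inl ⟨j, (mem_Ico.mp hj).2, by omega⟩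
  · obtain ⟨i, hi, hix⟩ := mem_image.mp hx
    have := lt_durfee_iff.mp (mem_Ico.mp hi).2
    refine Or.inr ⟨i, (mem_Ico.mp hi).2, ?_⟩
    rw [hook_diag hsc (mem_Ico.mp hi).2, hook_diag hsc hd]
    omega

theorem hook_diag_add_four_le
    (hdist : ∀ i j, i < lam.durfee → j < lam.durfee → i ≠ j → lam.parts i ≠ lam.parts j)
    {i j : ℕ} (hij : i < j) (hj : j < lam.durfee) : lam.hook j j + 4 ≤ lam.hook i i := by
  have := lt_durfee_iff.mp hj
  have := lam.antitone i j hij.le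
  have := hdist i j (hij.trans hj) hj hij.ne
  rw [hook_diag hsc (hij.trans hj), hook_diag hsc hj]
  omega

theorem hook_diag_add_hook_diag_ne {s : ℕ} (hcore : lam.IsCore s) {i j : ℕ}
    (hi : i < lam.durfee) (hj : j < lam.durfee) : lam.hook i i + lam.hook j j ≠ 2 * s := by
  obtain ⟨hcell, hhook⟩ := isCell_and_two_mul_hook hsc hi hj
  exact fun h => hcore i j hcell ⟨1, by omega⟩

/-- Conversely, off the Durfee square all hooks are shorter than `λ₀ ≤ s`, and a hook in it is
the mean of two diagonal hooks, which are shorter than `2s`. -/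
theorem isCore_of_parts_zero_le {s : ℕ} (hs : lam.parts 0 ≤ s)
    (hsum : ∀ i < lam.durfee, ∀ j < lam.durfee, lam.hook i i + lam.hook j j ≠ 2 * s) :
    lam.IsCore s := by
  intro i j hcell ⟨k, hk⟩
  have hpos := hook_pos hcell
  have hlt : lam.hook i j < 2 * s ∧ lam.hook i j ≠ s := by
    by_cases hbox : i < lam.durfee ∧ j < lam.durfee
    · have h2 := (isCell_and_two_mul_hook hsc hbox.1 hbox.2).2
      have := lam.antitone 0 i (Nat.zero_le i)
      have := lam.antitone 0 j (Nat.zero_le j)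
      have := hsum i hbox.1 j hbox.2
      rw [hook_diag hsc hbox.1, hook_diag hsc hbox.2] at h2 this
      omega
    · have := hook_lt_parts_zero hsc hcell hbox
      omega
  rcases k with _ | _ | k
  · omega
  · omega
  · nlinarith

end SelfConjugate

theorem hook_zero_zero_le {t : ℕ} (hds : lam.InDS t) (ht : 0 < t) :
    lam.hook 0 0 ≤ 2 * t - 1 := by
  obtain ⟨hsc, hcore, hcore', hdist⟩ := hds
  by_contra! h
  have hd : 0 < lam.durfee := by
    rw [hook, hsc] at h
    exact lt_durfee_iff.mpr (by omega)
  have hodd := hook_diag_mod_two hsc hd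
  have hp : lam.hook 0 0 + 1 = 2 * lam.parts 0 := by
    have := lt_durfee_iff.mp hd
    rw [hook_diag hsc hd]
    omega
  have hrow : ∀ s, lam.IsCore s → s < lam.parts 0 → 0 < s →
      ∃ i < lam.durfee, lam.hook i i + 2 * s = lam.hook 0 0 := fun s hs hsp hs0 =>
    (exists_hook_zero_eq_or_hook_diag_add hsc hs0 hsp).resolve_left
      fun ⟨j, hcell, hj⟩ => hs 0 j hcell (hj ▸ dvd_rfl)
  obtain ⟨i, hi, hit⟩ := hrow t hcore (by omega) ht
  rcases Nat.lt_or_ge (t + 1) (lam.parts 0) with hlt | hge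
  · obtain ⟨i', hi', hit'⟩ := hrow (t + 1) hcore' hlt (by omega)
    have hii' : i < i' := by
      by_contra! hle
      rcases hle.lt_or_eq with hlt | rfl
      · have := hook_diag_add_two_le hsc hlt hi
        omega
      · omega
    have := hook_diag_add_four_le hsc hdist hii' hi'
    omega
  · have := hook_diag_add_hook_diag_ne hsc hcore' hd hi
    omega

theorem hook_diag_le {t : ℕ} (hds : lam.InDS t) (ht : 0 < t) {i : ℕ} (hi : i < lam.durfee) :
    lam.hook i i ≤ 2 * t - 1 := by
  rcases Nat.eq_zero_or_pos i with rfl | hi0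
  · exact hook_zero_zero_le hds ht
  · have := hook_diag_add_four_le hds.1 hds.2.2.2 hi0 hi
    have := hook_zero_zero_le hds ht
    omega

section OfDiagonal

variable {d : ℕ} {μ : ℕ → ℕ} (hμ : StrictAntiOn μ (Set.Iio d)) (hd : ∀ i < d, d ≤ μ i)

include hμ in
theorem lt_card_filter_iff {i j : ℕ} : i < #{m ∈ range d | j < μ m} ↔ i < d ∧ j < μ i := by
  constructor
  · intro h
    by_contra! hij
    have hsub : {m ∈ range d | j < μ m} ⊆ range i := fun m hm => by
      rw [mem_filter, mem_range] at hm
      rw [mem_range]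
      by_contra! him
      have hid : i < d := him.trans_lt hm.1
      have := hμ.antitoneOn (Set.mem_Iio.mpr hid) (Set.mem_Iio.mpr hm.1) him
      have := hij hid
      omega
    have := card_le_card hsub
    rw [card_range] at this
    omega
  · rintro ⟨hid, hji⟩
    have hsub : range (i + 1) ⊆ {m ∈ range d | j < μ m} := fun m hm => by
      rw [mem_range] at hm
      have := hμ.antitoneOn (Set.mem_Iio.mpr (show m < d by omega)) (Set.mem_Iio.mpr hid)
        (Nat.lt_succ_iff.mp hm)
      rw [mem_filter, mem_range]
      exact ⟨by omega, by omega⟩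
    have := card_le_card hsub
    rw [card_range] at this
    omega

variable (d μ) in
/-- The rows of the self-conjugate partition with parts `μ 0, …, μ (d - 1)` in its Durfee
square; the remaining rows are read off the columns. -/
def diagParts (i : ℕ) : ℕ := if i < d then μ i else #{m ∈ range d | i < μ m}

include hμ hd in
theorem lt_diagParts_iff (i j : ℕ) : j < diagParts d μ i ↔ i < diagParts d μ j := by
  have hcard : ∀ k, #{m ∈ range d | k < μ m} ≤ d := fun k => by
    simpa using card_filter_le (range d) _
  unfold diagParts
  split_ifs with hi hj hj
  · have := hd i hi
    have := hd j hj
    omega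
  · rw [lt_card_filter_iff hμ]
    tauto
  · rw [lt_card_filter_iff hμ]
    tauto
  · have := hcard i
    have := hcard j
    omega

variable (d μ) in
include hμ hd in
def ofDiagonal : IntPartition where
  parts := diagParts d μ
  antitone i j hij := by
    by_contra! h
    have := (lt_diagParts_iff hμ hd j _).mp h
    exact lt_irrefl _ ((lt_diagParts_iff hμ hd (diagParts d μ i) i).mp (hij.trans_lt this))
  finite := ⟨d + μ 0, fun i hi => by
    by_contra h
    have := (lt_card_filter_iff hμ (i := 0) (j := i)).mp
    simp only [diagParts, if_neg (show ¬ i < d by omega)] at h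
    have := this (Nat.pos_of_ne_zero h)
    omega⟩

include hμ hd

theorem ofDiagonal_parts_of_lt {i : ℕ} (hi : i < d) : (ofDiagonal d μ hμ hd).parts i = μ i :=
  if_pos hi

theorem ofDiagonal_isSelfConjugate : (ofDiagonal d μ hμ hd).IsSelfConjugate :=
  isSelfConjugate_iff.mpr (lt_diagParts_iff hμ hd)

theorem ofDiagonal_durfee : (ofDiagonal d μ hμ hd).durfee = d := by
  refine eq_of_forall_lt_iff fun i => lt_durfee_iff.trans ?_
  show i < diagParts d μ i ↔ i < d
  unfold diagParts
  split_ifs with hi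
  · exact ⟨fun _ => hi, fun _ => (hd i hi).trans_lt' hi⟩
  · have := card_filter_le (range d) (fun m => i < μ m)
    rw [card_range] at this
    omega

theorem ofDiagonal_hook_diag {i : ℕ} (hi : i < d) :
    (ofDiagonal d μ hμ hd).hook i i = 2 * μ i - 2 * i - 1 := by
  rw [hook_diag (ofDiagonal_isSelfConjugate hμ hd) (by rwa [ofDiagonal_durfee]),
    ofDiagonal_parts_of_lt hμ hd hi]

theorem ofDiagonal_size :
    (ofDiagonal d μ hμ hd).size = ∑ i ∈ range d, (2 * μ i - 2 * i - 1) := by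
  rw [size_eq_sum_hook_diag (ofDiagonal_isSelfConjugate hμ hd), ofDiagonal_durfee]
  exact sum_congr rfl fun i hi => ofDiagonal_hook_diag hμ hd (mem_range.mp hi)

theorem ofDiagonal_inDS {t : ℕ} (ht : μ 0 ≤ t)
    (hsum : ∀ i < d, ∀ j < d, μ i + μ j ≠ i + j + t + 1 ∧ μ i + μ j ≠ i + j + t + 2) :
    (ofDiagonal d μ hμ hd).InDS t := by
  have hsc := ofDiagonal_isSelfConjugate hμ hd
  have hdur := ofDiagonal_durfee hμ hd
  have hp0 : (ofDiagonal d μ hμ hd).parts 0 ≤ t := by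
    rcases Nat.eq_zero_or_pos d with rfl | hd0
    · simp [ofDiagonal, diagParts]
    · rwa [ofDiagonal_parts_of_lt hμ hd hd0]
  have hcore : ∀ s, t ≤ s → (∀ i < d, ∀ j < d, μ i + μ j ≠ i + j + s + 1) →
      (ofDiagonal d μ hμ hd).IsCore s := fun s hts hs =>
    isCore_of_parts_zero_le hsc (hp0.trans hts) fun i hi j hj => by
      rw [hdur] at hi hj
      rw [ofDiagonal_hook_diag hμ hd hi, ofDiagonal_hook_diag hμ hd hj]
      have := hd i hi
      have := hd j hj
      have := hs i hi j hj
      omega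
  refine ⟨hsc, hcore t le_rfl fun i hi j hj => (hsum i hi j hj).1,
    hcore (t + 1) (Nat.le_succ t) fun i hi j hj => (hsum i hi j hj).2, fun i j hi hj hij => ?_⟩
  rw [hdur] at hi hj
  rw [ofDiagonal_parts_of_lt hμ hd hi, ofDiagonal_parts_of_lt hμ hd hj]
  exact fun h => hij (hμ.injOn hi hj h)

end OfDiagonal

/-- The diagonal hooks of the witness are `2t - 1, 2t - 5, …, 2t + 3 - 4a`, followed by
the `c` hooks `2t - 4a - 3, 2t - 4a - 9, …`. -/
theorem exists_inDS_size_eq {t a c : ℕ} (hc : 3 * c + 4 * a = t + 1) :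
    ∃ lam : IntPartition,
      lam.InDS t ∧ (lam.size : ℤ) = c * (t - 1 : ℤ) + a * (2 * t + 1 - 2 * a) := by
  set μ : ℕ → ℕ := fun i => if i < a then t - i else t + a - 1 - 2 * i
  have hμ : StrictAntiOn μ (Set.Iio (a + c)) := fun i hi j hj hij => by
    simp only [Set.mem_Iio] at hi hj
    simp only [μ]
    split_ifs <;> omega
  have hd : ∀ i < a + c, a + c ≤ μ i := fun i hi => by
    simp only [μ]
    split_ifs <;> omega
  refine ⟨ofDiagonal (a + c) μ hμ hd,
    ofDiagonal_inDS hμ hd (by simp only [μ]; split_ifs <;> omega)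
      fun i hi j hj => by simp only [μ]; split_ifs <;> omega, ?_⟩
  rw [ofDiagonal_size, Nat.cast_sum, sum_range_add]
  have hlow : ∀ i ∈ range a, ((2 * μ i - 2 * i - 1 : ℕ) : ℤ) = (2 * t - 1) - 4 * i := by
    intro i hi
    rw [mem_range] at hi
    simp only [μ, if_pos hi]
    omega
  have hhigh : ∀ j ∈ range c, ((2 * μ (a + j) - 2 * (a + j) - 1 : ℕ) : ℤ) =
      (2 * t - 4 * a - 3) - 6 * j := by
    intro j hj
    rw [mem_range] at hj
    simp only [μ, if_neg (show ¬ a + j < a by omega)]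
    omega
  rw [sum_congr rfl hlow, sum_congr rfl hhigh]
  have h1 := Finset.two_mul_sum_range_sub_mul (2 * t - 1) 4 a
  have h2 := Finset.two_mul_sum_range_sub_mul (2 * t - 4 * a - 3) 6 c
  have h3 : (3 * c + 4 * a : ℤ) = t + 1 := by exact_mod_cast hc
  refine mul_left_cancel₀ (two_ne_zero' ℤ) ?_
  rw [mul_add, h1, h2]
  linear_combination -2 * (c : ℤ) * h3

end IntPartition

section FoldedWeights

/-- Weight of the position `x ∈ [1, t - 1]` once diagonal hooks above `t + 1` are folded onto
`2t + 1 - h`: an odd `x` is an unfolded hook, an even `x` is the image of the hook `2t + 1 - x`. -/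
def foldWeight (t x : ℕ) : ℤ := if x % 2 = 1 then x else 2 * t + 1 - x

def foldHook (t h : ℕ) : ℕ := if h ≤ t - 1 then h else 2 * t + 1 - h

def chainWeight (t s q : ℕ) : ℤ := ∑ i ∈ range q, foldWeight t (s + 3 * i)

/-- The weight of the positions `2, 6, …, 4e - 2` followed by `4e + 1, 4e + 4, …` up to `n`. -/
def packedWeight (t e n : ℕ) : ℤ :=
  ∑ i ∈ range e, foldWeight t (4 * i + 2) + chainWeight t (4 * e + 1) ((n + 2 - 4 * e) / 3)

variable {t : ℕ}

theorem foldWeight_nonneg {x : ℕ} (hx : x ≤ 2 * t + 1) : 0 ≤ foldWeight t x := by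
  unfold foldWeight
  split_ifs <;> omega

theorem foldWeight_foldHook {h : ℕ} (hodd : h % 2 = 1) (hh : h ≤ 2 * t - 1) (ht : h ≠ t) :
    foldWeight t (foldHook t h) = h := by
  unfold foldHook foldWeight
  split_ifs <;> omega

theorem foldHook_add_three_le {h h' : ℕ} (hodd : h % 2 = 1) (hodd' : h' % 2 = 1)
    (hh : h ≤ 2 * t - 1) (hlt : h' + 4 ≤ h) (hsum : h + h' ≠ 2 * t) (hsum' : h + h' ≠ 2 * t + 2) :
    foldHook t h + 3 ≤ foldHook t h' ∨ foldHook t h' + 3 ≤ foldHook t h := by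
  unfold foldHook
  split_ifs <;> omega

theorem sum_foldWeight_four_mul_add_two (e : ℕ) :
    ∑ i ∈ range e, foldWeight t (4 * i + 2) = e * (2 * t + 1 - 2 * e) := by
  induction e with
  | zero => simp
  | succ e ih =>
    rw [sum_range_succ, ih, foldWeight, if_neg (by omega)]
    push_cast
    ring

theorem chainWeight_succ (s q : ℕ) :
    chainWeight t s (q + 1) = chainWeight t s q + foldWeight t (s + 3 * q) :=
  sum_range_succ _ _

theorem chainWeight_add_four {s : ℕ} (hs : s % 2 = 1) (q : ℕ) :
    chainWeight t (s + 4) q = chainWeight t s q + 4 * (q % 2 : ℕ) := by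
  induction q with
  | zero => simp [chainWeight]
  | succ q ih =>
    rw [chainWeight_succ, chainWeight_succ, ih, foldWeight, foldWeight]
    rcases Nat.mod_two_eq_zero_or_one q with hq | hq
    · rw [if_pos (by omega), if_pos (by omega), hq, show (q + 1) % 2 = 1 by omega]
      push_cast
      ring
    · rw [if_neg (by omega), if_neg (by omega), hq, show (q + 1) % 2 = 0 by omega]
      push_cast
      ring

/-- Consecutive chain positions have opposite parities, and their weights add up to `2t - 2`. -/
theorem chainWeight_two_mul {s : ℕ} (hs : s % 2 = 1) (m : ℕ) :
    chainWeight t s (2 * m) = m * (2 * t - 2) := by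
  induction m with
  | zero => simp [chainWeight]
  | succ m ih =>
    rw [show 2 * (m + 1) = 2 * m + 1 + 1 by ring, chainWeight_succ, chainWeight_succ, ih,
      foldWeight, foldWeight, if_pos (by omega), if_neg (by omega)]
    push_cast
    ring

theorem chainWeight_two_mul_add_one {s : ℕ} (hs : s % 2 = 1) (m : ℕ) :
    chainWeight t s (2 * m + 1) = m * (2 * t - 2) + (s + 6 * m) := by
  rw [chainWeight_succ, chainWeight_two_mul hs, foldWeight, if_pos (by omega)]
  push_cast
  ring

theorem chainWeight_le {s q : ℕ} (hs : s % 2 = 1) (hq : s + 3 * q ≤ t + 2) :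
    chainWeight t s q ≤ (t - 1 : ℤ) * q := by
  obtain ⟨m, rfl | rfl⟩ := Nat.even_or_odd' q
  · rw [chainWeight_two_mul hs]
    push_cast
    linarith
  · rw [chainWeight_two_mul_add_one hs]
    have : (s : ℤ) + 6 * m ≤ t - 1 := by omega
    push_cast
    linarith

theorem chainWeight_mono {s q q' : ℕ} (hqq' : q ≤ q') (hq' : s + 3 * q' ≤ 2 * t + 4) :
    chainWeight t s q ≤ chainWeight t s q' :=
  sum_le_sum_of_subset_of_nonneg (range_subset_range.mpr hqq') fun i hi _ =>
    foldWeight_nonneg (by rw [mem_range] at hi; omega)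

theorem packedWeight_mono {e m n : ℕ} (he : 4 * e ≤ n + 2) (hmn : m ≤ n) (hn : n ≤ 2 * t + 1) :
    packedWeight t e m ≤ packedWeight t e n := by
  have := chainWeight_mono (t := t) (s := 4 * e + 1)
    (Nat.div_le_div_right (c := 3) (show m + 2 - 4 * e ≤ n + 2 - 4 * e by omega)) (by omega)
  unfold packedWeight
  linarith

/-- Take `e' = e` if `n` extends the chain, and `e' = e + 1` otherwise: shifting the chain up by
`4` does not lower its weight, and the new even position `4e + 2` outweighs `n`. -/
theorem exists_foldWeight_add_packedWeight_le {e n : ℕ} (hn : n + 1 ≤ t) (he : 4 * e + 1 ≤ n) :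
    ∃ e', 4 * e' ≤ n + 2 ∧ foldWeight t n + packedWeight t e (n - 3) ≤ packedWeight t e' n := by
  have hq : (n - 3 + 2 - 4 * e) / 3 = (n - 1 - 4 * e) / 3 := by omega
  by_cases hr : (n - 1 - 4 * e) % 3 = 0
  · refine ⟨e, by omega, le_of_eq ?_⟩
    rw [packedWeight, packedWeight, hq,
      show (n + 2 - 4 * e) / 3 = (n - 1 - 4 * e) / 3 + 1 by omega, chainWeight_succ,
      show 4 * e + 1 + 3 * ((n - 1 - 4 * e) / 3) = n by omega]
    ring
  · refine ⟨e + 1, by omega, ?_⟩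
    rw [packedWeight, packedWeight, hq, sum_range_succ,
      show (n + 2 - 4 * (e + 1)) / 3 = (n - 1 - 4 * e) / 3 by omega,
      show 4 * (e + 1) + 1 = 4 * e + 1 + 4 by ring, chainWeight_add_four (by omega)]
    have hfold : foldWeight t n ≤ foldWeight t (4 * e + 2) := by
      unfold foldWeight
      split_ifs <;> omega
    have : (0 : ℤ) ≤ 4 * (((n - 1 - 4 * e) / 3 % 2 : ℕ) : ℤ) := by positivity
    linarith

theorem exists_sum_foldWeight_le_packedWeight {n : ℕ} (hn : n + 1 ≤ t) (C : Finset ℕ)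
    (hC : ∀ x ∈ C, 1 ≤ x ∧ x ≤ n) (hsep : ∀ x ∈ C, ∀ y ∈ C, x < y → x + 3 ≤ y) :
    ∃ e, 4 * e ≤ n + 2 ∧ ∑ x ∈ C, foldWeight t x ≤ packedWeight t e n := by
  induction n using Nat.strong_induction_on generalizing C with
  | _ n ih =>
    rcases C.eq_empty_or_nonempty with rfl | hne
    · refine ⟨0, by omega, ?_⟩
      simpa [packedWeight, chainWeight] using
        chainWeight_mono (t := t) (s := 1) (Nat.zero_le ((n + 2) / 3)) (by omega)
    set M := C.max' hne
    have hM := hC M (C.max'_mem hne)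
    have herase : ∀ x ∈ C.erase M, 1 ≤ x ∧ x ≤ M - 3 := fun x hx => by
      have hxM := C.lt_max'_of_mem_erase_max' hne hx
      have := hsep x (mem_of_mem_erase hx) M (C.max'_mem hne) hxM
      exact ⟨(hC x (mem_of_mem_erase hx)).1, by omega⟩
    obtain ⟨e, he, hsum⟩ := ih (M - 3) (by omega) (by omega) (C.erase M) herase
      fun x hx y hy => hsep x (mem_of_mem_erase hx) y (mem_of_mem_erase hy)
    obtain ⟨e', he', hstep⟩ := exists_foldWeight_add_packedWeight_le (t := t) (by omega)
      (show 4 * e + 1 ≤ M by omega)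
    refine ⟨e', by omega, ?_⟩
    calc ∑ x ∈ C, foldWeight t x = foldWeight t M + ∑ x ∈ C.erase M, foldWeight t x :=
          (add_sum_erase C _ (C.max'_mem hne)).symm
      _ ≤ packedWeight t e' M := by linarith
      _ ≤ packedWeight t e' n := packedWeight_mono (by omega) hM.2 (by omega)

/-- With `q` the chain length, `r = (t + 1 - 4e) % 3` and `s = (2t + 1) % 12`, three times the
gap between the bound and `e(2t + 1 - 2e) + (t - 1)q` is `(a - e)(6(a - e) + s + 6) + r(t - 1)`;
as `r ≡ a - e (mod 3)`, this is nonnegative for every `e`. -/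
theorem packedWeight_le {a c e : ℕ} (ha : a = (2 * t + 1) / 12) (ha1 : 1 ≤ a)
    (hc : 3 * c + 4 * a = t + 1) (he : 4 * e ≤ t + 1) :
    packedWeight t e (t - 1) ≤ c * (t - 1 : ℤ) + a * (2 * t + 1 - 2 * a) := by
  set q := (t - 1 + 2 - 4 * e) / 3
  have hchain := chainWeight_le (t := t) (s := 4 * e + 1) (q := q) (by omega) (by omega)
  rw [packedWeight, sum_foldWeight_four_mul_add_two]
  obtain ⟨r, hr, hqr⟩ : ∃ r, r ≤ 2 ∧ 3 * q + r + 4 * e = t + 1 :=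
    ⟨(t + 1 - 4 * e) % 3, by omega, by omega⟩
  obtain ⟨s, hs, has⟩ : ∃ s, s ≤ 11 ∧ 12 * a + s = 2 * t + 1 :=
    ⟨(2 * t + 1) % 12, by omega, by omega⟩
  have key : 3 * ((c * (t - 1 : ℤ) + a * (2 * t + 1 - 2 * a)) -
      (e * (2 * t + 1 - 2 * e) + (t - 1 : ℤ) * q)) =
      (a - e : ℤ) * (6 * (a - e) + s + 6) + r * (t - 1) := by
    have r1 : (3 * q + r + 4 * e : ℤ) = t + 1 := by exact_mod_cast hqr
    have r2 : (3 * c + 4 * a : ℤ) = t + 1 := by exact_mod_cast hc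
    have r3 : (12 * a + s : ℤ) = 2 * t + 1 := by exact_mod_cast has
    linear_combination ((t : ℤ) - 1) * r2 - ((t : ℤ) - 1) * r1 - ((a : ℤ) - e) * r3
  have hnonneg : 0 ≤ (a - e : ℤ) * (6 * (a - e) + s + 6) + r * (t - 1) := by
    have ht : (1 : ℤ) ≤ t := by omega
    rcases (show e ≤ a ∨ e = a + 1 ∨ e = a + 2 ∨ a + 3 ≤ e by omega) with h | h | h | h
    · have : (0 : ℤ) ≤ a - e := by omega
      positivity
    · have hr2 : r = 2 := by omega
      subst hr2 h
      push_cast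
      nlinarith
    · have hr1 : r = 1 := by omega
      subst hr1 h
      push_cast
      nlinarith
    · have h1 : (a - e : ℤ) ≤ -3 := by omega
      have h2 : (6 * (a - e) + s + 6 : ℤ) ≤ 0 := by omega
      nlinarith
  linarith

end FoldedWeights

namespace IntPartition

theorem exists_separated_sum_foldWeight_eq_size {lam : IntPartition} {t : ℕ} (hds : lam.InDS t)
    (ht : 0 < t) : ∃ C : Finset ℕ, (∀ x ∈ C, 1 ≤ x ∧ x ≤ t - 1) ∧
      (∀ x ∈ C, ∀ y ∈ C, x < y → x + 3 ≤ y) ∧ ∑ x ∈ C, foldWeight t x = lam.size := by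
  have hle := fun i (hi : i < lam.durfee) => hook_diag_le hds ht hi
  obtain ⟨hsc, hcore, hcore', hdist⟩ := hds
  let f i := foldHook t (lam.hook i i)
  have hne : ∀ i < lam.durfee, ∀ j < lam.durfee,
      lam.hook i i + lam.hook j j ≠ 2 * t ∧ lam.hook i i + lam.hook j j ≠ 2 * t + 2 :=
    fun i hi j hj => ⟨hook_diag_add_hook_diag_ne hsc hcore hi hj,
      hook_diag_add_hook_diag_ne hsc hcore' hi hj⟩
  have hsep : ∀ i < lam.durfee, ∀ j < lam.durfee, i ≠ j → f i + 3 ≤ f j ∨ f j + 3 ≤ f i := by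
    intro i hi j hj hij
    wlog hlt : i < j generalizing i j
    · exact (this j hj i hi hij.symm (by omega)).symm
    exact foldHook_add_three_le (hook_diag_mod_two hsc hi) (hook_diag_mod_two hsc hj)
      (hle i hi) (hook_diag_add_four_le hsc hdist hlt hj) (hne i hi j hj).1
      (hne i hi j hj).2
  refine ⟨(range lam.durfee).image f, ?_, ?_, ?_⟩
  · simp only [mem_image, mem_range]
    rintro _ ⟨i, hi, rfl⟩
    have := hook_diag_mod_two hsc hi
    have := hle i hi
    have := hne i hi i hi
    simp only [f, foldHook]
    split_ifs <;> omega
  · simp only [mem_image, mem_range]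
    rintro _ ⟨i, hi, rfl⟩ _ ⟨j, hj, rfl⟩ hlt
    have := hsep i hi j hj (by rintro rfl; omega)
    omega
  · rw [sum_image fun i hi j hj h => by_contra fun hij => by
        have := hsep i (mem_range.mp hi) j (mem_range.mp hj) hij
        omega,
      size_eq_sum_hook_diag hsc, Nat.cast_sum]
    refine sum_congr rfl fun i hi => ?_
    rw [mem_range] at hi
    have := (hne i hi i hi).1
    exact foldWeight_foldHook (hook_diag_mod_two hsc hi) (hle i hi) (by omega)

theorem size_le_of_inDS {lam : IntPartition} {t a c : ℕ} (hds : lam.InDS t)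
    (ha : a = (2 * t + 1) / 12) (ha1 : 1 ≤ a) (hc : 3 * c + 4 * a = t + 1) :
    (lam.size : ℤ) ≤ c * (t - 1 : ℤ) + a * (2 * t + 1 - 2 * a) := by
  obtain ⟨C, hC, hsep, hsum⟩ := exists_separated_sum_foldWeight_eq_size hds (by omega)
  obtain ⟨e, he, hle⟩ :=
    exists_sum_foldWeight_le_packedWeight (t := t) (n := t - 1) (by omega) C hC hsep
  rw [← hsum]
  exact hle.trans (packedWeight_le ha ha1 hc (by omega))

end IntPartition

/-- Case (1) of the largest-size theorem: for `t ≥ 6` even with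
`t/2 - 1 - 2⌊(2t+1)/12⌋ ≡ 0 (mod 3)`, or `t ≥ 6` odd with
`(t-1)/2 - 2⌊(2t+1)/12⌋ ≡ 2 (mod 3)`, the largest size of a partition in
`DS(t)` is `(1/3)(t-1)(t+1-4⌊(2t+1)/12⌋) + ⌊(2t+1)/12⌋(2t+1-2⌊(2t+1)/12⌋)`. -/
theorem largest_size_inDS_case_one (t : ℕ) (ht : 6 ≤ t)
    (hcase :
      (Even t ∧ ((t : ℤ) / 2 - 1 - 2 * ((2 * (t : ℤ) + 1) / 12)) % 3 = 0) ∨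
      (Odd t ∧ (((t : ℤ) - 1) / 2 - 2 * ((2 * (t : ℤ) + 1) / 12)) % 3 = 2)) :
    IsGreatest {n : ℤ | ∃ lam : IntPartition, lam.InDS t ∧ (lam.size : ℤ) = n}
      (((t : ℤ) - 1) * ((t : ℤ) + 1 - 4 * ((2 * (t : ℤ) + 1) / 12)) / 3 +
        ((2 * (t : ℤ) + 1) / 12) *
          (2 * (t : ℤ) + 1 - 2 * ((2 * (t : ℤ) + 1) / 12))) := by
  set a := (2 * t + 1) / 12 with ha
  have hA : (2 * (t : ℤ) + 1) / 12 = a := by omega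
  rw [hA] at hcase ⊢
  obtain ⟨c, hc⟩ : ∃ c, 3 * c + 4 * a = t + 1 := by
    rcases hcase with ⟨hpar, hmod⟩ | ⟨hpar, hmod⟩
    · exact ⟨(t + 1 - 4 * a) / 3, by have := Nat.even_iff.mp hpar; omega⟩
    · exact ⟨(t + 1 - 4 * a) / 3, by have := Nat.odd_iff.mp hpar; omega⟩
  rw [show (t : ℤ) + 1 - 4 * a = 3 * c by omega, mul_left_comm,
    Int.mul_ediv_cancel_left _ three_ne_zero, mul_comm (t - 1 : ℤ)]
  exact ⟨IntPartition.exists_inDS_size_eq hc, fun _ ⟨lam, hds, hsize⟩ =>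
    hsize ▸ IntPartition.size_le_of_inDS hds ha (by omega) hc⟩
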